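/- Let F(m,n) = ((m+n-1)^2 - (m+n-1) % 2)/4 + min(m,n) on positive integers. For any pairs of positive integers (x₁,y₁) ≠ (x₂,y₂): if (x₁,y₁) = (y₂,x₂) then F(x₁,y₁) = F(x₂,y₂), and if (x₁,y₁) ≠ (y₂,x₂) then F(x₁,y₁) ≠ F(x₂,y₂). -/
import Mathlib


def F (m n : ℕ) : ℕ := ((m + n - 1)^2 - (m + n - 1) % 2) / 4 + min m n

private def g (a : ℕ) : ℕ := (a ^ 2 - a % 2) / 4

private lemma g_even (u : ℕ) : g (2 * u) = u * u := by
  have h : (2 * u) ^ 2 = 4 * (u * u) := by ring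
  simp only [g]
  omega

private lemma g_odd (u : ℕ) : g (2 * u + 1) = u * u + u := by
  have h : (2 * u + 1) ^ 2 = 4 * (u * u + u) + 1 := by ring
  simp only [g]
  omega

private lemma g_mono : Monotone g := by
  apply monotone_nat_of_le_succ
  intro a
  rcases Nat.even_or_odd a with ⟨u, hu⟩ | ⟨u, hu⟩
  · subst hu
    rw [show u + u = 2 * u by ring, g_even, g_odd]
    omega
  · subst hu
    rw [g_odd, show 2 * u + 1 + 1 = 2 * (u + 1) by ring, g_even]
    have : (u + 1) * (u + 1) = u * u + 2 * u + 1 := by ring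
    omega

private lemma g_step (s : ℕ) : g s + (s + 1) / 2 = g (s + 1) := by
  rcases Nat.even_or_odd s with ⟨u, hu⟩ | ⟨u, hu⟩
  · subst hu
    rw [show u + u = 2 * u by ring, g_even, g_odd]
    omega
  · subst hu
    rw [g_odd, show 2 * u + 1 + 1 = 2 * (u + 1) by ring, g_even]
    have : (u + 1) * (u + 1) = u * u + 2 * u + 1 := by ring
    omega

private lemma F_eq (m n : ℕ) : F m n = g (m + n - 1) + min m n := rfl

private lemma F_bounds (m n : ℕ) (hm : 1 ≤ m) (hn : 1 ≤ n) :
    g (m + n - 1) < F m n ∧ F m n ≤ g (m + n) := by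
  rw [F_eq]
  have hmin1 : 1 ≤ min m n := by omega
  have hmin2 : min m n ≤ (m + n - 1 + 1) / 2 := by omega
  have hs := g_step (m + n - 1)
  rw [show m + n - 1 + 1 = m + n by omega] at hs hmin2
  omega

private lemma F_inj (m n m' n' : ℕ) (hm : 1 ≤ m) (hn : 1 ≤ n)
    (hm' : 1 ≤ m') (hn' : 1 ≤ n') (h : F m n = F m' n') :
    m + n = m' + n' ∧ min m n = min m' n' := by
  have hb := F_bounds m n hm hn
  have hb' := F_bounds m' n' hm' hn'
  have hsum : m + n = m' + n' := by
    by_contra hne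
    rcases Nat.lt_or_ge (m + n) (m' + n') with hlt | hge
    · have : g (m + n) ≤ g (m' + n' - 1) := g_mono (by omega)
      omega
    · have : g (m' + n') ≤ g (m + n - 1) := g_mono (by omega)
      omega
  refine ⟨hsum, ?_⟩
  rw [F_eq, F_eq, hsum] at h
  omega

theorem theorem4 (x₁ y₁ x₂ y₂ : ℕ) (hx₁ : 1 ≤ x₁) (hy₁ : 1 ≤ y₁)
    (hx₂ : 1 ≤ x₂) (hy₂ : 1 ≤ y₂) (hne : (x₁, y₁) ≠ (x₂, y₂)) :
    ((x₁, y₁) = (y₂, x₂) → F x₁ y₁ = F x₂ y₂) ∧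
    ((x₁, y₁) ≠ (y₂, x₂) → F x₁ y₁ ≠ F x₂ y₂) := by
  constructor
  · intro h
    obtain ⟨h1, h2⟩ := Prod.mk.injEq .. ▸ h
    subst h1; subst h2
    simp [F, Nat.add_comm, Nat.min_comm]
  · intro h2 hF
    obtain ⟨hsum, hmin⟩ := F_inj x₁ y₁ x₂ y₂ hx₁ hy₁ hx₂ hy₂ hF
    simp only [ne_eq, Prod.mk.injEq, not_and] at hne h2
    omega
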